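/- arXiv:0901.1375 — 3 statements merged into one kernel-verified Lean document; each statement's English description precedes it below -/
import Mathlib

section
/- Let S = {x ∈ ℝ^d : f_i(x) ≥ c_i for all i = 1,…,m} be a rational polyhedron, where f_i ∈ (ℤ^d)* and c_i ∈ ℤ, and let Rec(S) = {y ∈ ℝ^d : f_i(y) ≥ 0 for all i} be its recession cone. If S is non-empty, then D(S) equals the annihilator Rec(S)^⊥ of Rec(S), and 0 < width(S) < ∞ holds if and only if dim(S) = d and dim(Rec(S)) < d. -/
open Set

noncomputable section

/-- Coordinatewise cast of an integer vector into `ℝ^d`. -/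
def ic {d : ℕ} (v : Fin d → ℤ) : Fin d → ℝ := fun i => (v i : ℝ)

/-- Evaluation of an integer dual vector `v ∈ (ℤ^d)*` at a point `x ∈ ℝ^d`. -/
def ieval {d : ℕ} (v : Fin d → ℤ) (x : Fin d → ℝ) : ℝ := ∑ i, (v i : ℝ) * x i

/-- `v` is a direction in which `S` is bounded (i.e. `v ∈ D(S)`). -/
def IsBddDir {d : ℕ} (S : Set (Fin d → ℝ)) (v : Fin d → ℤ) : Prop :=
  BddAbove (ieval v '' S) ∧ BddBelow (ieval v '' S)

/-- The width of `S` in direction `v`: `sup v(S) − inf v(S)`. -/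
def dirWidth {d : ℕ} (S : Set (Fin d → ℝ)) (v : Fin d → ℤ) : ℝ :=
  sSup (ieval v '' S) - sInf (ieval v '' S)

/-- The lattice width of `S`: the infimum of the widths over all nonzero
    integer directions in which `S` is bounded (`⊤` if there is no such direction). -/
def latticeWidth {d : ℕ} (S : Set (Fin d → ℝ)) : EReal :=
  ⨅ v ∈ {v : Fin d → ℤ | v ≠ 0 ∧ IsBddDir S v}, ((dirWidth S v : ℝ) : EReal)

/-- The set `S'` of lattice width directions of `S`. -/
def widthDirs {d : ℕ} (S : Set (Fin d → ℝ)) : Set (Fin d → ℤ) :=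
  {v | v ≠ 0 ∧ IsBddDir S v ∧ ((dirWidth S v : ℝ) : EReal) = latticeWidth S}

/-!
Both parts rest on Farkas' lemma. A functional `u` bounded above on `S` is `≤ 0` on `Rec(S)`,
because `S` contains the rays `x + t • y` with `y ∈ Rec(S)`; conversely, if `u ≤ 0` on `Rec(S)`,
Farkas writes `-u = ∑ λ i • f i` with `λ ≥ 0`, so `u ≤ -∑ λ i * c i` on `S`. Hence
`D(S) = Rec(S)^⊥`.

Averaging points at which single constraints are strict shows that a polyhedron with empty
interior has a nonzero `f i` that is constant on it. For `S` this makes `f i` an integer direction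
of width `0`, while a ball of radius `ε` inside `S` gives width `≥ ε` in every nonzero integer
direction. For `Rec(S)` it makes `f i` a bounded integer direction by the first part; conversely a
nonzero bounded direction annihilates `Rec(S)`, which therefore does not span.
-/

section ConicCaratheodory

variable {𝕜 E ι : Type*} [Field 𝕜] [LinearOrder 𝕜] [IsStrictOrderedRing 𝕜]
  [AddCommGroup E] [Module 𝕜 E]

theorem exists_ssubset_sum_eq_of_not_linearIndepOn {F : ι → E} {s : Finset ι}
    (hs : ¬LinearIndepOn 𝕜 F (s : Set ι)) {l : ι → 𝕜} (hl : ∀ i ∈ s, 0 ≤ l i) :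
    ∃ t ⊂ s, ∃ l' : ι → 𝕜, (∀ i ∈ t, 0 ≤ l' i) ∧ ∑ i ∈ t, l' i • F i = ∑ i ∈ s, l i • F i := by
  classical
  obtain ⟨g, hg, hpos⟩ : ∃ g : ι → 𝕜, ∑ i ∈ s, g i • F i = 0 ∧ ∃ i ∈ s, 0 < g i := by
    obtain ⟨g, hg, i, hi, hgi⟩ := not_linearIndepOn_finset_iff.mp hs
    rcases hgi.lt_or_gt with hneg | hpos
    · exact ⟨-g, by simp [neg_smul, hg], i, hi, by simpa using hneg⟩
    · exact ⟨g, hg, i, hi, hpos⟩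
  -- subtract the largest multiple `τ • g` that keeps the coefficients nonnegative
  obtain ⟨i₀, hi₀, hmin⟩ := Finset.exists_min_image (s.filter (0 < g ·)) (fun i => l i / g i)
    (by simpa [Finset.Nonempty] using hpos)
  rw [Finset.mem_filter] at hi₀
  set τ := l i₀ / g i₀
  have hτ : 0 ≤ τ := div_nonneg (hl i₀ hi₀.1) hi₀.2.le
  have hzero : l i₀ - τ * g i₀ = 0 := by rw [div_mul_cancel₀ _ hi₀.2.ne', sub_self]
  refine ⟨s.erase i₀, Finset.erase_ssubset hi₀.1, fun i => l i - τ * g i,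
    fun i hi => sub_nonneg.mpr ?_, ?_⟩
  · replace hi := Finset.mem_of_mem_erase hi
    rcases le_or_gt (g i) 0 with hgi | hgi
    · exact (mul_nonpos_of_nonneg_of_nonpos hτ hgi).trans (hl i hi)
    · exact (le_div_iff₀ hgi).mp (hmin i (Finset.mem_filter.mpr ⟨hi, hgi⟩))
  · rw [Finset.sum_erase _ (by simp only [hzero, zero_smul])]
    simp only [sub_smul, mul_smul, Finset.sum_sub_distrib, ← Finset.smul_sum, hg, smul_zero,
      sub_zero]

/-- Carathéodory's theorem for cones. -/
theorem exists_linearIndepOn_sum_eq (F : ι → E) (s : Finset ι) (l : ι → 𝕜)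
    (hl : ∀ i ∈ s, 0 ≤ l i) :
    ∃ t ⊆ s, LinearIndepOn 𝕜 F (t : Set ι) ∧ ∃ l' : ι → 𝕜, (∀ i ∈ t, 0 ≤ l' i) ∧
      ∑ i ∈ t, l' i • F i = ∑ i ∈ s, l i • F i := by
  induction s using Finset.strongInduction generalizing l with
  | H s ih =>
    by_cases hs : LinearIndepOn 𝕜 F (s : Set ι)
    · exact ⟨s, subset_rfl, hs, l, hl, rfl⟩
    obtain ⟨t, hts, l', hl', hsum⟩ := exists_ssubset_sum_eq_of_not_linearIndepOn hs hl
    obtain ⟨u, hut, hu, l'', hl'', hsum'⟩ := ih t hts l' hl'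
    exact ⟨u, hut.trans hts.subset, hu, l'', hl'', hsum'.trans hsum⟩

end ConicCaratheodory

section Farkas

theorem PointedCone.mem_hull_range_iff {E ι : Type*} [AddCommGroup E] [Module ℝ E] [Fintype ι]
    {F : ι → E} {x : E} :
    x ∈ PointedCone.hull ℝ (range F) ↔ ∃ l : ι → ℝ, 0 ≤ l ∧ ∑ i, l i • F i = x := by
  rw [Submodule.mem_span_range_iff_exists_fun]
  constructor
  · rintro ⟨c, rfl⟩
    exact ⟨fun i => c i, fun i => (c i).2, rfl⟩
  · rintro ⟨l, hl, rfl⟩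
    exact ⟨fun i => ⟨l i, hl i⟩, rfl⟩

variable {E ι : Type*} [AddCommGroup E] [Module ℝ E] [TopologicalSpace E]
  [IsTopologicalAddGroup E] [ContinuousSMul ℝ E] [T2Space E] [Fintype ι]

theorem LinearIndependent.isClosed_hull_range {F : ι → E} (hF : LinearIndependent ℝ F) :
    IsClosed (PointedCone.hull ℝ (range F) : Set E) := by
  have : (PointedCone.hull ℝ (range F) : Set E) = Fintype.linearCombination ℝ F '' Ici 0 := by
    ext x
    simp [PointedCone.mem_hull_range_iff, Fintype.linearCombination_apply]
  rw [this]
  exact (LinearMap.isClosedEmbedding_of_injective (LinearMap.ker_eq_bot.mpr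
    hF.fintypeLinearCombination_injective)).isClosedMap _ isClosed_Ici

theorem PointedCone.isClosed_hull_range (F : ι → E) :
    IsClosed (PointedCone.hull ℝ (range F) : Set E) := by
  have : (PointedCone.hull ℝ (range F) : Set E) =
      ⋃ (t : Finset ι) (_ : LinearIndepOn ℝ F (t : Set ι)),
        (PointedCone.hull ℝ (range fun i : t => F i) : Set E) := by
    refine Subset.antisymm (fun x hx => ?_) (iUnion₂_subset fun t _ => ?_)
    · obtain ⟨l, hl, rfl⟩ := PointedCone.mem_hull_range_iff.mp hx
      obtain ⟨t, -, ht, l', hl', hsum⟩ :=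
        exists_linearIndepOn_sum_eq F Finset.univ l fun i _ => hl i
      refine mem_iUnion₂.mpr ⟨t, ht, PointedCone.mem_hull_range_iff.mpr
        ⟨fun i => l' i, fun i => hl' i i.2, ?_⟩⟩
      rw [← hsum, ← Finset.sum_coe_sort t]
    · exact Submodule.span_mono (range_comp_subset_range _ F)
  rw [this]
  exact isClosed_iUnion_of_finite fun t => isClosed_iUnion_of_finite fun ht =>
    LinearIndependent.isClosed_hull_range ht

/-- **Farkas' lemma**. -/
theorem exists_nonneg_sum_eq_of_forall_strongDual [LocallyConvexSpace ℝ E] (F : ι → E) {w : E}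
    (h : ∀ φ : StrongDual ℝ E, (∀ i, 0 ≤ φ (F i)) → 0 ≤ φ w) :
    ∃ l : ι → ℝ, 0 ≤ l ∧ ∑ i, l i • F i = w := by
  rw [← PointedCone.mem_hull_range_iff]
  by_contra hw
  obtain ⟨φ, hφ, hφw⟩ := ProperCone.hyperplane_separation_point
    ⟨PointedCone.hull ℝ (range F), PointedCone.isClosed_hull_range F⟩ hw
  exact (h φ fun i => hφ _ (PointedCone.subset_hull (mem_range_self i))).not_gt hφw

end Farkas

theorem ConcaveOn.exists_forall_lt {E ι : Type*} [AddCommGroup E] [Module ℝ E] {s : Set E}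
    (hs : s.Nonempty) {g : ι → E → ℝ} {c : ι → ℝ} (I : Finset ι)
    (hg : ∀ i ∈ I, ConcaveOn ℝ s (g i)) (hle : ∀ i ∈ I, ∀ x ∈ s, c i ≤ g i x)
    (hlt : ∀ i ∈ I, ∃ x ∈ s, c i < g i x) : ∃ x ∈ s, ∀ i ∈ I, c i < g i x := by
  classical
  induction I using Finset.induction_on with
  | empty => exact ⟨hs.some, hs.some_mem, by simp⟩
  | insert j I _ ih =>
    simp only [Finset.forall_mem_insert] at hg hle hlt ⊢
    obtain ⟨x, hx, hxI⟩ := ih hg.2 hle.2 hlt.2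
    obtain ⟨y, hy, hyj⟩ := hlt.1
    have hmid : ∀ i, ConcaveOn ℝ s (g i) → c i ≤ g i x → c i ≤ g i y →
        c i < g i x ∨ c i < g i y → c i < g i ((1 / 2 : ℝ) • x + (1 / 2 : ℝ) • y) := by
      intro i hgi hx' hy' hstrict
      refine lt_of_lt_of_le ?_ (hgi.2 hx hy (by norm_num) (by norm_num) (by norm_num))
      simp only [smul_eq_mul]
      rcases hstrict with h | h <;> linarith
    refine ⟨_, hg.1.1 hx hy (by norm_num) (by norm_num) (by norm_num),
      hmid j hg.1 (hle.1 x hx) (hle.1 y hy) (Or.inr hyj), fun i hi => ?_⟩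
    exact hmid i (hg.2 i hi) (hle.2 i hi x hx) (hle.2 i hi y hy) (Or.inl (hxI i hi))

section Polyhedron

variable {ι n : Type*} [Fintype n]

def polyhedron (a : ι → n → ℝ) (b : ι → ℝ) : Set (n → ℝ) := {x | ∀ i, b i ≤ a i ⬝ᵥ x}

variable {a : ι → n → ℝ} {b : ι → ℝ}

theorem convex_polyhedron : Convex ℝ (polyhedron a b) := by
  simp only [polyhedron, ofPred_forall]
  exact convex_iInter fun i => convex_halfSpace_ge (dotProductBilin ℝ ℝ (a i)).isLinear (b i)

theorem add_smul_mem_polyhedron {x y : n → ℝ} (hx : x ∈ polyhedron a b) (hy : y ∈ polyhedron a 0)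
    {t : ℝ} (ht : 0 ≤ t) : x + t • y ∈ polyhedron a b := fun i => by
  rw [dotProduct_add, dotProduct_smul, smul_eq_mul]
  linarith [hx i, mul_nonneg ht (hy i)]

theorem dotProduct_nonpos_of_bddAbove_image_polyhedron {x u y : n → ℝ} (hx : x ∈ polyhedron a b)
    (hu : BddAbove ((u ⬝ᵥ ·) '' polyhedron a b)) (hy : y ∈ polyhedron a 0) : u ⬝ᵥ y ≤ 0 := by
  obtain ⟨M, hM⟩ := hu
  by_contra! hpos
  have hxM : u ⬝ᵥ x ≤ M := hM (mem_image_of_mem _ hx)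
  set t := (M - u ⬝ᵥ x + 1) / (u ⬝ᵥ y)
  have hray : u ⬝ᵥ (x + t • y) = M + 1 := by
    rw [dotProduct_add, dotProduct_smul, smul_eq_mul, div_mul_cancel₀ _ hpos.ne']
    ring
  have := hM (mem_image_of_mem _ (add_smul_mem_polyhedron hx hy (by positivity : 0 ≤ t)))
  linarith

theorem bddAbove_image_polyhedron_of_dotProduct_nonpos [Fintype ι] {u : n → ℝ}
    (hu : ∀ y ∈ polyhedron a 0, u ⬝ᵥ y ≤ 0) : BddAbove ((u ⬝ᵥ ·) '' polyhedron a b) := by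
  classical
  obtain ⟨l, hl, hsum⟩ : ∃ l : ι → ℝ, 0 ≤ l ∧ ∑ i, l i • a i = -u := by
    refine exists_nonneg_sum_eq_of_forall_strongDual a fun φ hφ => ?_
    have hφ_eq : ∀ v, φ v = v ⬝ᵥ fun j => φ fun k => if j = k then 1 else 0 := fun v => by
      simpa [dotProduct] using (φ : (n → ℝ) →ₗ[ℝ] ℝ).pi_apply_eq_sum_univ v
    rw [hφ_eq, neg_dotProduct, neg_nonneg]
    exact hu _ fun i => by rw [Pi.zero_apply, ← hφ_eq]; exact hφ i
  refine ⟨-∑ i, l i * b i, forall_mem_image.mpr fun x hx => ?_⟩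
  have : u ⬝ᵥ x = -∑ i, l i * (a i ⬝ᵥ x) := by
    rw [← neg_neg u, ← hsum, neg_dotProduct, sum_dotProduct]
    simp [smul_dotProduct]
  rw [this, neg_le_neg_iff]
  exact Finset.sum_le_sum fun i _ => mul_le_mul_of_nonneg_left (hx i) (hl i)

theorem bddAbove_image_polyhedron_iff [Fintype ι] (hne : (polyhedron a b).Nonempty)
    {u : n → ℝ} : BddAbove ((u ⬝ᵥ ·) '' polyhedron a b) ↔ ∀ y ∈ polyhedron a 0, u ⬝ᵥ y ≤ 0 :=
  ⟨fun hu _ hy => dotProduct_nonpos_of_bddAbove_image_polyhedron hne.some_mem hu hy,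
    bddAbove_image_polyhedron_of_dotProduct_nonpos⟩

theorem bddBelow_image_polyhedron_iff [Fintype ι] (hne : (polyhedron a b).Nonempty)
    {u : n → ℝ} : BddBelow ((u ⬝ᵥ ·) '' polyhedron a b) ↔ ∀ y ∈ polyhedron a 0, 0 ≤ u ⬝ᵥ y := by
  have : -((u ⬝ᵥ ·) '' polyhedron a b) = ((-u) ⬝ᵥ ·) '' polyhedron a b := by
    simp only [← image_neg_eq_neg, image_image, neg_dotProduct]
  rw [← bddAbove_neg, this, bddAbove_image_polyhedron_iff hne]
  simp only [neg_dotProduct, neg_nonpos]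

theorem bddAbove_and_bddBelow_image_polyhedron_iff [Fintype ι]
    (hne : (polyhedron a b).Nonempty) {u : n → ℝ} :
    BddAbove ((u ⬝ᵥ ·) '' polyhedron a b) ∧ BddBelow ((u ⬝ᵥ ·) '' polyhedron a b) ↔
      ∀ y ∈ polyhedron a 0, u ⬝ᵥ y = 0 := by
  rw [bddAbove_image_polyhedron_iff hne, bddBelow_image_polyhedron_iff hne]
  exact ⟨fun h y hy => le_antisymm (h.1 y hy) (h.2 y hy),
    fun h => ⟨fun y hy => (h y hy).le, fun y hy => (h y hy).ge⟩⟩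

theorem interior_polyhedron_nonempty [Fintype ι] (hne : (polyhedron a b).Nonempty)
    (h : ∀ i, a i ≠ 0 → ∃ x ∈ polyhedron a b, b i < a i ⬝ᵥ x) :
    (interior (polyhedron a b)).Nonempty := by
  classical
  let I := Finset.univ.filter (a · ≠ 0)
  obtain ⟨x, -, hx⟩ := ConcaveOn.exists_forall_lt hne I
    (fun i _ => (dotProductBilin ℝ ℝ (a i)).concaveOn convex_polyhedron)
    (fun i _ x hx => hx i) (fun i hi => h i (Finset.mem_filter.mp hi).2)
  have hopen : IsOpen {z : n → ℝ | ∀ i ∈ I, b i < a i ⬝ᵥ z} := by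
    simp only [ofPred_forall]
    exact isOpen_biInter_finset fun i _ => isOpen_lt continuous_const (by fun_prop)
  refine ⟨x, mem_interior.mpr ⟨_, fun z hz i => ?_, hopen, hx⟩⟩
  by_cases hi : a i = 0
  · obtain ⟨x₀, hx₀⟩ := hne
    simpa [hi] using hx₀ i
  · exact (hz i (Finset.mem_filter.mpr ⟨Finset.mem_univ i, hi⟩)).le

theorem exists_forall_dotProduct_eq_of_interior_eq_empty [Fintype ι]
    (hne : (polyhedron a b).Nonempty) (h : interior (polyhedron a b) = ∅) :
    ∃ i, a i ≠ 0 ∧ ∀ x ∈ polyhedron a b, a i ⬝ᵥ x = b i := by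
  by_contra! hno
  refine (interior_polyhedron_nonempty hne fun i hi => ?_).ne_empty h
  obtain ⟨x, hx, hxi⟩ := hno i hi
  exact ⟨x, hx, (hx i).lt_of_ne' hxi⟩

end Polyhedron

section Span

variable {n : Type*} [Fintype n] {s : Set (n → ℝ)}

theorem finrank_span_lt_of_dotProduct_eq_zero {u : n → ℝ} (hu : u ≠ 0)
    (hs : ∀ y ∈ s, u ⬝ᵥ y = 0) : Module.finrank ℝ (Submodule.span ℝ s) < Fintype.card n := by
  rw [← Module.finrank_fintype_fun_eq_card ℝ]
  refine Submodule.finrank_lt fun htop => hu (dotProduct_self_eq_zero.mp ?_)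
  have hle : Submodule.span ℝ s ≤ LinearMap.ker (dotProductBilin ℝ ℝ u) :=
    Submodule.span_le.mpr hs
  exact hle (htop ▸ Submodule.mem_top)

theorem interior_eq_empty_of_finrank_span_lt
    (h : Module.finrank ℝ (Submodule.span ℝ s) < Fintype.card n) : interior s = ∅ := by
  by_contra hne
  have htop := (Submodule.span ℝ s).eq_top_of_nonempty_interior'
    ((nonempty_iff_ne_empty.mpr hne).mono (interior_mono Submodule.subset_span))
  rw [htop, finrank_top, Module.finrank_fintype_fun_eq_card] at h
  exact h.false

end Span

section LatticeWidth

variable {d : ℕ} {S : Set (Fin d → ℝ)} {v : Fin d → ℤ}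

theorem ic_eq_zero_iff : ic v = 0 ↔ v = 0 := by
  simp [funext_iff, ic]

theorem latticeWidth_le_dirWidth (hv : v ≠ 0) (hb : IsBddDir S v) :
    latticeWidth S ≤ dirWidth S v :=
  iInf₂_le v ⟨hv, hb⟩

theorem latticeWidth_lt_top_iff : latticeWidth S < ⊤ ↔ ∃ v, v ≠ 0 ∧ IsBddDir S v := by
  simp [latticeWidth, iInf_lt_iff, EReal.coe_lt_top]

theorem latticeWidth_nonpos_of_forall_ieval_eq (hne : S.Nonempty) (hv : v ≠ 0) {r : ℝ}
    (hr : ∀ x ∈ S, ieval v x = r) : latticeWidth S ≤ 0 := by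
  have himg : ieval v '' S = {r} := (image_congr hr).trans (hne.image_const r)
  have hb : IsBddDir S v := by
    simp only [IsBddDir, himg, bddAbove_singleton, bddBelow_singleton, and_self]
  have hw : dirWidth S v = 0 := by
    rw [dirWidth, himg, csSup_singleton, csInf_singleton, sub_self]
  simpa [hw] using latticeWidth_le_dirWidth hv hb

theorem abs_sub_le_dirWidth (hb : IsBddDir S v) {x y : Fin d → ℝ} (hx : x ∈ S) (hy : y ∈ S) :
    |ieval v x - ieval v y| ≤ dirWidth S v := by
  have hsup : ∀ z ∈ S, ieval v z ≤ sSup (ieval v '' S) := fun z hz =>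
    le_csSup hb.1 (mem_image_of_mem _ hz)
  have hinf : ∀ z ∈ S, sInf (ieval v '' S) ≤ ieval v z := fun z hz =>
    csInf_le hb.2 (mem_image_of_mem _ hz)
  rw [dirWidth, abs_sub_le_iff]
  constructor <;> linarith [hsup x hx, hsup y hy, hinf x hx, hinf y hy]

theorem le_dirWidth_of_ball_subset {x : Fin d → ℝ} {ε : ℝ} (hε : 0 < ε)
    (hball : Metric.ball x ε ⊆ S) (hv : v ≠ 0) (hb : IsBddDir S v) : ε ≤ dirWidth S v := by
  classical
  obtain ⟨j, hvj⟩ := Function.ne_iff.mp hv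
  have hmem : ∀ t, |t| < ε → x + Pi.single j t ∈ S := fun t ht =>
    hball (by simpa [dist_eq_norm, Pi.norm_single] using ht)
  have hhalf : |ε / 2| < ε := by rw [abs_of_pos (half_pos hε)]; exact half_lt_self hε
  have hwidth := abs_sub_le_dirWidth hb (hmem _ hhalf) (hmem _ ((abs_neg _).trans_lt hhalf))
  have hj : (1 : ℝ) ≤ |(v j : ℝ)| := by exact_mod_cast Int.one_le_abs hvj
  change |ic v ⬝ᵥ _ - ic v ⬝ᵥ _| ≤ _ at hwidth
  simp only [dotProduct_add, dotProduct_single, ic] at hwidth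
  calc ε ≤ |(v j : ℝ)| * ε := le_mul_of_one_le_left hε.le hj
    _ = |(v j : ℝ) * ε| := by rw [abs_mul, abs_of_pos hε]
    _ ≤ dirWidth S v := by convert hwidth using 2; ring

theorem zero_lt_latticeWidth_of_interior_nonempty (h : (interior S).Nonempty) :
    0 < latticeWidth S := by
  obtain ⟨x, hx⟩ := h
  obtain ⟨ε, hε, hball⟩ := Metric.isOpen_iff.mp isOpen_interior x hx
  refine (EReal.coe_pos.mpr hε).trans_le (le_iInf₂ fun v hv => ?_)
  exact EReal.coe_le_coe_iff.mpr
    (le_dirWidth_of_ball_subset hε (hball.trans interior_subset) hv.1 hv.2)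

end LatticeWidth

/-- For a nonempty rational polyhedron `S = {x : f i x ≥ c i}` with recession cone
    `Rec(S) = {y : f i y ≥ 0}`, the space `D(S)` of functionals bounded on `S` is the
    annihilator of `Rec(S)`, and `0 < width(S) < ∞` holds if and only if `S` is
    full-dimensional and `Rec(S)` is not. -/
theorem rational_polyhedron_width {d m : ℕ} (f : Fin m → Fin d → ℤ) (c : Fin m → ℤ)
    (S : Set (Fin d → ℝ))
    (hS : S = {x : Fin d → ℝ | ∀ i, (c i : ℝ) ≤ ∑ j, (f i j : ℝ) * x j})
    (hne : S.Nonempty)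
    (Rec : Set (Fin d → ℝ))
    (hRec : Rec = {y : Fin d → ℝ | ∀ i, 0 ≤ ∑ j, (f i j : ℝ) * y j}) :
    {u : Fin d → ℝ |
        BddAbove ((fun x => ∑ j, u j * x j) '' S) ∧
        BddBelow ((fun x => ∑ j, u j * x j) '' S)} =
      {u : Fin d → ℝ | ∀ y ∈ Rec, ∑ j, u j * y j = 0} ∧
    (((0 : EReal) < latticeWidth S ∧ latticeWidth S < ⊤) ↔
      (affineSpan ℝ S = ⊤ ∧ Module.finrank ℝ (Submodule.span ℝ Rec) < d)) := by
  obtain rfl : S = polyhedron (fun i => ic (f i)) (fun i => c i) := hS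
  obtain rfl : Rec = polyhedron (fun i => ic (f i)) 0 := hRec
  have hD (u : Fin d → ℝ) := bddAbove_and_bddBelow_image_polyhedron_iff hne (u := u)
  have hdir (v : Fin d → ℤ) := hD (ic v)
  have hint := (convex_polyhedron (a := fun i => ic (f i))
    (b := fun i => (c i : ℝ))).interior_nonempty_iff_affineSpan_eq_top
  refine ⟨Set.ext hD, fun ⟨hpos, hfin⟩ => ⟨?_, ?_⟩, fun ⟨htop, hrk⟩ => ⟨?_, ?_⟩⟩
  · rw [← hint]
    by_contra hempty
    obtain ⟨i, hi, heq⟩ := exists_forall_dotProduct_eq_of_interior_eq_empty hne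
      (not_nonempty_iff_eq_empty.mp hempty)
    exact (latticeWidth_nonpos_of_forall_ieval_eq hne (mt ic_eq_zero_iff.mpr hi) heq).not_gt hpos
  · obtain ⟨v, hv, hb⟩ := latticeWidth_lt_top_iff.mp hfin
    simpa using finrank_span_lt_of_dotProduct_eq_zero (mt ic_eq_zero_iff.mp hv) ((hdir v).mp hb)
  · exact zero_lt_latticeWidth_of_interior_nonempty (hint.mpr htop)
  · obtain ⟨i, hi, heq⟩ := exists_forall_dotProduct_eq_of_interior_eq_empty
      ⟨0, fun i => (dotProduct_zero _).ge⟩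
      (interior_eq_empty_of_finrank_span_lt (hrk.trans_eq (Fintype.card_fin d).symm))
    exact latticeWidth_lt_top_iff.mpr ⟨f i, mt ic_eq_zero_iff.mpr hi, (hdir (f i)).mpr heq⟩
end
end

section
/- Let K ⊆ ℝ^d be a d-dimensional centrally-symmetric convex set with K°_ℤ = {0}, and suppose that no lattice point on the boundary of K lies in the convex hull of the other boundary lattice points. Then |K_ℤ| ≤ 2^{d+1} − 1. -/
open Set

noncomputable section

/-- `K_ℤ`: the set of lattice points of `ℤ^d` lying in `K`. -/
def latticePts {d : ℕ} (K : Set (Fin d → ℝ)) : Set (Fin d → ℤ) := {x | ic x ∈ K}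

/-- `K°_ℤ`: the set of lattice points of `ℤ^d` lying in the relative interior of `K`. -/
def relintLatticePts {d : ℕ} (K : Set (Fin d → ℝ)) : Set (Fin d → ℤ) :=
  {x | ic x ∈ intrinsicInterior ℝ K}

lemma ic_neg {d : ℕ} (v : Fin d → ℤ) : ic (-v) = - ic v := by
  funext i; simp [ic]

/-- Minkowski's refined bound: if `K` is a `d`-dimensional centrally-symmetric convex
    set with `K°_ℤ = {0}` such that no boundary lattice point of `K` lies in the convex
    hull of the other boundary lattice points, then `K` has at most `2^(d+1) − 1`
    lattice points. -/
theorem card_latticePts_le_of_no_boundary_point_in_hull {d : ℕ} (K : Set (Fin d → ℝ))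
    (hconv : Convex ℝ K) (hsym : K = -K) (hdim : affineSpan ℝ K = ⊤)
    (hint : relintLatticePts K = {0})
    (hbd : ∀ v ∈ latticePts K \ relintLatticePts K,
      ic v ∉ convexHull ℝ (ic '' ((latticePts K \ relintLatticePts K) \ {v}))) :
    (latticePts K).Finite ∧ (latticePts K).ncard ≤ 2 ^ (d + 1) - 1 := by
  classical
  set B : Set (Fin d → ℤ) := latticePts K \ relintLatticePts K with hB
  -- basic facts
  have hzero : (0 : Fin d → ℤ) ∈ relintLatticePts K := by rw [hint]; rfl
  have hrelsub : relintLatticePts K ⊆ latticePts K := fun x hx =>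
    show ic x ∈ K from intrinsicInterior_subset (s := K) hx
  have hBne0 : ∀ v ∈ B, v ≠ 0 := by
    rintro v ⟨_, hv2⟩ rfl; exact hv2 hzero
  have hBK : ∀ v ∈ B, ic v ∈ K := fun v hv => hv.1
  have hnegK : ∀ v : Fin d → ℤ, ic v ∈ K → ic (-v) ∈ K := by
    intro v hv
    rw [ic_neg, hsym]
    simpa using hv
  have hnegB : ∀ v ∈ B, -v ∈ B := by
    rintro v ⟨hv1, hv2⟩
    refine ⟨hnegK v hv1, ?_⟩
    intro hcon
    rw [hint] at hcon
    apply hv2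
    have : v = 0 := by simpa [neg_eq_zero] using hcon
    rw [hint, this]; rfl
  -- helper: an integer point strictly inside a segment between two boundary points is 0
  have helper : ∀ a ∈ B, ∀ b ∈ B, ∀ w : Fin d → ℤ, w ≠ a → w ≠ b →
      ic w ∈ segment ℝ (ic a) (ic b) → w = 0 := by
    intro a ha b hb w hwa hwb hseg
    have hwK : ic w ∈ K := hconv.segment_subset (hBK a ha) (hBK b hb) hseg
    by_cases hrel : w ∈ relintLatticePts K
    · rw [hint] at hrel; exact hrel
    · exfalso
      apply hbd w ⟨hwK, hrel⟩
      have hsub : ({ic a, ic b} : Set (Fin d → ℝ)) ⊆ ic '' (B \ {w}) := by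
        rintro x (rfl | rfl)
        · exact ⟨a, ⟨ha, by simpa using fun h => hwa h.symm⟩, rfl⟩
        · exact ⟨b, ⟨hb, by simpa using fun h => hwb h.symm⟩, rfl⟩
      have h1 : ic w ∈ convexHull ℝ ({ic a, ic b} : Set (Fin d → ℝ)) := by
        rw [convexHull_pair]; exact hseg
      exact convexHull_mono hsub h1
  -- no nonzero boundary point has all coordinates even
  have class0 : ∀ v ∈ B, ¬ (∀ i, (2 : ℤ) ∣ v i) := by
    intro v hv hdvd
    set w : Fin d → ℤ := fun i => v i / 2 with hw
    have hic : ic w = (3/4 : ℝ) • ic v + (1/4 : ℝ) • ic (-v) := by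
      funext i
      obtain ⟨k, hk⟩ := hdvd i
      have hwk : w i = k := by rw [hw]; simp [hk]
      have hkr : (v i : ℝ) = 2 * (k : ℝ) := by exact_mod_cast hk
      simp only [ic, Pi.add_apply, Pi.smul_apply, Pi.neg_apply, smul_eq_mul, hwk]
      push_cast
      linarith
    have hseg : ic w ∈ segment ℝ (ic v) (ic (-v)) :=
      ⟨3/4, 1/4, by norm_num, by norm_num, by norm_num, hic.symm⟩
    have hvne : v ≠ 0 := hBne0 v hv
    have hwv : w ≠ v := by
      intro h
      apply hvne
      funext i
      obtain ⟨k, hk⟩ := hdvd i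
      have : w i = v i := congrFun h i
      simp only [hw, Pi.zero_apply, Pi.neg_apply] at this
      simp only [Pi.zero_apply]
      omega
    have hwnv : w ≠ -v := by
      intro h
      apply hvne
      funext i
      obtain ⟨k, hk⟩ := hdvd i
      have : w i = -v i := congrFun h i
      simp only [hw, Pi.zero_apply, Pi.neg_apply] at this
      simp only [Pi.zero_apply]
      omega
    have := helper v hv (-v) (hnegB v hv) w hwv hwnv hseg
    apply hvne
    funext i
    obtain ⟨k, hk⟩ := hdvd i
    have : w i = 0 := congrFun this i
    simp only [hw, Pi.zero_apply, Pi.neg_apply] at this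
    simp only [Pi.zero_apply]
    omega
  -- two boundary points congruent mod 2 are equal or opposite
  have parity : ∀ u ∈ B, ∀ v ∈ B, (∀ i, (2 : ℤ) ∣ u i - v i) → u = v ∨ u = -v := by
    intro u hu v hv hdvd
    by_cases huv : u = v
    · exact Or.inl huv
    by_cases hunv : u = -v
    · exact Or.inr hunv
    exfalso
    set w : Fin d → ℤ := fun i => (u i - v i) / 2 with hw
    have hic : ic w = (1/2 : ℝ) • ic u + (1/2 : ℝ) • ic (-v) := by
      funext i
      obtain ⟨k, hk⟩ := hdvd i
      have hwk : w i = k := by rw [hw]; simp [hk]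
      have hkr : (u i : ℝ) - (v i : ℝ) = 2 * (k : ℝ) := by exact_mod_cast hk
      simp only [ic, Pi.add_apply, Pi.smul_apply, Pi.neg_apply, smul_eq_mul, hwk]
      push_cast
      linarith
    have hseg : ic w ∈ segment ℝ (ic u) (ic (-v)) :=
      ⟨1/2, 1/2, by norm_num, by norm_num, by norm_num, hic.symm⟩
    have hwu : w ≠ u := by
      intro h
      apply hunv
      funext i
      obtain ⟨k, hk⟩ := hdvd i
      have : w i = u i := congrFun h i
      simp only [hw, Pi.zero_apply, Pi.neg_apply] at this
      simp only [Pi.neg_apply]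
      omega
    have hwnv : w ≠ -v := by
      intro h
      apply hunv
      funext i
      obtain ⟨k, hk⟩ := hdvd i
      have : w i = -v i := congrFun h i
      simp only [hw, Pi.zero_apply, Pi.neg_apply] at this
      simp only [Pi.neg_apply]
      omega
    have hw0 := helper u hu (-v) (hnegB v hv) w hwu hwnv hseg
    apply huv
    funext i
    obtain ⟨k, hk⟩ := hdvd i
    have : w i = 0 := congrFun hw0 i
    simp only [hw, Pi.zero_apply, Pi.neg_apply] at this
    omega
  -- B is finite: reduction mod 4 is injective on B
  have hr4inj : Set.InjOn (fun v : Fin d → ℤ => fun i => ((v i : ZMod 4))) B := by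
    intro u hu v hv heq
    have hdvd : ∀ i, (4 : ℤ) ∣ v i - u i := by
      intro i
      have : ((u i : ZMod 4)) = ((v i : ZMod 4)) := congrFun heq i
      have := (ZMod.intCast_eq_intCast_iff _ _ _).mp this
      exact this.dvd
    have h2 : ∀ i, (2 : ℤ) ∣ u i - v i := by
      intro i; obtain ⟨k, hk⟩ := hdvd i; exact ⟨-2*k, by linarith⟩
    rcases parity u hu v hv h2 with h | h
    · exact h
    · exfalso
      apply class0 v hv
      intro i
      obtain ⟨k, hk⟩ := hdvd i
      have : u i = -v i := by rw [h]; rfl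
      omega
  have hBfin : B.Finite :=
    Set.Finite.of_finite_image (Set.toFinite _) hr4inj
  -- counting via reduction mod 2
  set r : (Fin d → ℤ) → (Fin d → ZMod 2) := fun v i => ((v i : ZMod 2)) with hrdef
  set F : Finset (Fin d → ℤ) := hBfin.toFinset with hF
  have hFB : ∀ v, v ∈ F ↔ v ∈ B := fun v => hBfin.mem_toFinset
  have hfiber : ∀ c ∈ F.image r, (F.filter fun v => r v = c).card ≤ 2 := by
    intro c hc
    obtain ⟨v, hvF, hvc⟩ := Finset.mem_image.mp hc
    have hsub : (F.filter fun u => r u = c) ⊆ {v, -v} := by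
      intro u hu
      obtain ⟨huF, huc⟩ := Finset.mem_filter.mp hu
      have hdvd : ∀ i, (2 : ℤ) ∣ u i - v i := by
        intro i
        have : ((v i : ZMod 2)) = ((u i : ZMod 2)) := by
          rw [show ((v i : ZMod 2)) = c i from congrFun hvc i,
              show ((u i : ZMod 2)) = c i from congrFun huc i]
        simpa using ((ZMod.intCast_eq_intCast_iff _ _ _).mp this).dvd
      rcases parity u ((hFB u).mp huF) v ((hFB v).mp hvF) hdvd with h | h
      · simp [h]
      · simp [h]
    calc (F.filter fun u => r u = c).card ≤ ({v, -v} : Finset _).card :=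
          Finset.card_le_card hsub
      _ ≤ 2 := Finset.card_insert_le _ _ |>.trans (by simp)
  have himg : F.image r ⊆ Finset.univ.erase 0 := by
    intro c hc
    obtain ⟨v, hvF, hvc⟩ := Finset.mem_image.mp hc
    refine Finset.mem_erase.mpr ⟨?_, Finset.mem_univ _⟩
    intro h0
    apply class0 v ((hFB v).mp hvF)
    intro i
    have : ((v i : ZMod 2)) = 0 := by
      rw [show ((v i : ZMod 2)) = c i from congrFun hvc i, h0]; rfl
    exact_mod_cast (ZMod.intCast_zmod_eq_zero_iff_dvd _ 2).mp this
  have hcard2d : Fintype.card (Fin d → ZMod 2) = 2 ^ d := by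
    rw [Fintype.card_fun]; simp
  have himgcard : (F.image r).card ≤ 2 ^ d - 1 := by
    calc (F.image r).card ≤ (Finset.univ.erase (0 : Fin d → ZMod 2)).card :=
          Finset.card_le_card himg
      _ = Fintype.card (Fin d → ZMod 2) - 1 :=
          by rw [Finset.card_erase_of_mem (Finset.mem_univ _), Finset.card_univ]
      _ = 2 ^ d - 1 := by rw [hcard2d]
  have hFcard : F.card ≤ 2 * (2 ^ d - 1) :=
    (Finset.card_le_mul_card_image F 2 hfiber).trans
      (Nat.mul_le_mul_left 2 himgcard)
  have hBcard : B.ncard ≤ 2 * (2 ^ d - 1) := by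
    rw [Set.ncard_eq_toFinset_card B hBfin]
    exact hFcard
  -- latticePts K = insert 0 B
  have hlat : latticePts K = insert 0 B := by
    ext x
    constructor
    · intro hx
      by_cases hrel : x ∈ relintLatticePts K
      · rw [hint] at hrel; left; exact hrel
      · right; exact ⟨hx, hrel⟩
    · rintro (rfl | hx)
      · exact hrelsub hzero
      · exact hx.1
  constructor
  · rw [hlat]; exact hBfin.insert 0
  · rw [hlat]
    have h1 : (insert (0 : Fin d → ℤ) B).ncard ≤ B.ncard + 1 := Set.ncard_insert_le _ _
    have h2 : 1 ≤ 2 ^ d := Nat.one_le_two_pow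
    have h3 : 2 ^ (d + 1) = 2 * 2 ^ d := by rw [pow_succ]; ring
    omega
end
end

section
/- Let K ⊆ ℝ^d be a centrally-symmetric convex set with K°_ℤ = {0}. Then the reduction map ℤ^d → (ℤ/3ℤ)^d is injective on K_ℤ. -/
open Set

noncomputable section

/-!
If `x ≡ y (mod 3)` then `v = (x - y) / 3` is a lattice point, and by central symmetry
`v = (2/3) • m` with `m = (x + (-y)) / 2 ∈ K`. Since `0 ∈ K°` (it is the unique point of `K°_ℤ`),
every point of the half-open segment `[0, m)` lies in the relative interior of `K`, so
`v ∈ K°_ℤ = {0}` and `x = y`.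
-/

theorem Convex.combo_intrinsicInterior_mem_intrinsicInterior {E : Type*} [AddCommGroup E]
    [Module ℝ E] [TopologicalSpace E] [IsTopologicalAddGroup E] [ContinuousSMul ℝ E]
    {K : Set E} (hK : Convex ℝ K) {x w : E} (hx : x ∈ intrinsicInterior ℝ K) (hw : w ∈ K)
    {a b : ℝ} (ha : 0 < a) (hb : 0 ≤ b) (hab : a + b = 1) :
    a • x + b • w ∈ intrinsicInterior ℝ K := by
  obtain rfl : b = 1 - a := by linarith
  set S := affineSpan ℝ K
  obtain ⟨x, hxK, rfl⟩ := mem_intrinsicInterior.1 hx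
  have hwS : w ∈ S := subset_affineSpan ℝ K hw
  have hzS : a • (x : E) + (1 - a) • w ∈ S := by
    simpa only [AffineMap.lineMap_apply_module, sub_sub_cancel, add_comm]
      using AffineMap.lineMap_mem (1 - a) x.2 hwS
  -- The homothety `h` about `w` with ratio `a⁻¹` sends `a • x + (1 - a) • w` to `x`, and every
  -- `p` is the convex combination `a • h p + (1 - a) • w`, so `h` pulls the interior of `K` into `K`.
  let h : S → S := fun p => ⟨AffineMap.homothety w a⁻¹ (p : E), AffineMap.lineMap_mem _ hwS p.2⟩
  have h_apply (p : S) : (h p : E) = a⁻¹ • ((p : E) - w) + w := by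
    simp [h, AffineMap.homothety_apply]
  have hh : Continuous h :=
    ((AffineMap.homothety_continuous w a⁻¹).comp continuous_subtype_val).subtype_mk _
  have hhz : h ⟨_, hzS⟩ = x := by
    ext1
    rw [h_apply, show a • (x : E) + (1 - a) • w - w = a • ((x : E) - w) by module, smul_smul,
      inv_mul_cancel₀ ha.ne', one_smul, sub_add_cancel]
  have hpre : h ⁻¹' interior (Subtype.val ⁻¹' K) ⊆ Subtype.val ⁻¹' K := fun p hp => by
    show (p : E) ∈ K
    convert hK (interior_subset (s := Subtype.val ⁻¹' K) hp) hw ha.le hb hab using 1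
    rw [h_apply, smul_add, smul_smul, mul_inv_cancel₀ ha.ne', one_smul]
    module
  refine mem_intrinsicInterior.2 ⟨⟨_, hzS⟩, interior_maximal hpre
    (isOpen_interior.preimage hh) ?_, rfl⟩
  rw [Set.mem_preimage, hhz]
  exact hxK

theorem Convex.smul_sub_mem_intrinsicInterior {E : Type*} [AddCommGroup E]
    [Module ℝ E] [TopologicalSpace E] [IsTopologicalAddGroup E] [ContinuousSMul ℝ E]
    {K : Set E} (hK : Convex ℝ K) (hsym : K = -K) (h0 : (0 : E) ∈ intrinsicInterior ℝ K)
    {p q : E} (hp : p ∈ K) (hq : q ∈ K) {t : ℝ} (ht₀ : 0 ≤ t) (ht : 2 * t < 1) :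
    t • (p - q) ∈ intrinsicInterior ℝ K := by
  have hq' : -q ∈ K := by rw [hsym, Set.mem_neg, neg_neg]; exact hq
  have hmid : (1 / 2 : ℝ) • p + (1 / 2 : ℝ) • -q ∈ K := hK hp hq' (by norm_num) (by norm_num)
    (by norm_num)
  convert hK.combo_intrinsicInterior_mem_intrinsicInterior h0 hmid (a := 1 - 2 * t)
    (b := 2 * t) (by linarith) (by linarith) (by ring) using 1
  module

theorem exists_eq_add_natCast_smul_of_intCast_eq {ι : Type*} {n : ℕ} {x y : ι → ℤ}
    (h : (fun i => (x i : ZMod n)) = fun i => (y i : ZMod n)) :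
    ∃ v : ι → ℤ, x = y + (n : ℤ) • v := by
  choose v hv using fun i => (ZMod.intCast_eq_intCast_iff_dvd_sub (y i) (x i) n).1
    (congrFun h i).symm
  exact ⟨v, funext fun i => by simp [← hv i]⟩

theorem ic_zero {d : ℕ} : ic (0 : Fin d → ℤ) = 0 := by
  funext i; simp [ic]

theorem ic_add_smul {d : ℕ} (y v : Fin d → ℤ) (n : ℤ) :
    ic (y + n • v) = ic y + (n : ℝ) • ic v := by
  funext i; simp [ic]

/-- For a centrally-symmetric convex set `K` with `K°_ℤ = {0}`, the reduction map
    `ℤ^d → (ℤ/3ℤ)^d` is injective on the set of lattice points of `K`. -/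
theorem mod_three_injOn_latticePts {d : ℕ} (K : Set (Fin d → ℝ))
    (hconv : Convex ℝ K) (hsym : K = -K)
    (hint : relintLatticePts K = {0}) :
    Set.InjOn (fun x : Fin d → ℤ => fun i => ((x i : ZMod 3))) (latticePts K) := by
  intro x hx y hy hxy
  obtain ⟨v, rfl⟩ := exists_eq_add_natCast_smul_of_intCast_eq (n := 3) hxy
  have h0 : (0 : Fin d → ℝ) ∈ intrinsicInterior ℝ K := by
    have : ic (0 : Fin d → ℤ) ∈ intrinsicInterior ℝ K :=
      show (0 : Fin d → ℤ) ∈ relintLatticePts K from hint ▸ rfl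
    rwa [ic_zero] at this
  have hv : v ∈ relintLatticePts K := by
    have := hconv.smul_sub_mem_intrinsicInterior hsym h0 hx hy (t := 1 / 3) (by norm_num)
      (by norm_num)
    rw [ic_add_smul, add_sub_cancel_left, smul_smul] at this
    simpa [relintLatticePts] using this
  rw [hint, Set.mem_singleton_iff] at hv
  simp [hv]
end
end
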